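/- Let A be a C*-algebra, X a semi-inner product A-module, and x, z ∈ X with ⟨x,z⟩ = 0, ⟨x,x⟩ ≠ 0 and ⟨z,z⟩ ≠ 0. Then for every y ∈ X the Ostrowski inequality ⟨y,z⟩⟨z,y⟩ ≤ (‖z‖²/‖x‖²) · (‖x‖²⟨y,y⟩ − ⟨y,x⟩⟨x,y⟩) holds in A. -/

import Mathlib

/-- A semi-inner product `A`-module: a right `A`-module `X` (which is also a complex
vector space, with compatible actions) together with an `A`-valued semi-inner product. -/
structure SemiInnerProductModule (A : Type*) (X : Type*)
    [NonUnitalCStarAlgebra A] [PartialOrder A] [StarOrderedRing A]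
    [AddCommGroup X] [Module ℂ X] where
  /-- the right action of `A` on `X` -/
  rsmul : X → A → X
  /-- the `A`-valued semi-inner product -/
  inner : X → X → A
  add_rsmul : ∀ (x y : X) (a : A), rsmul (x + y) a = rsmul x a + rsmul y a
  rsmul_add : ∀ (x : X) (a b : A), rsmul x (a + b) = rsmul x a + rsmul x b
  rsmul_mul : ∀ (x : X) (a b : A), rsmul (rsmul x a) b = rsmul x (a * b)
  smul_rsmul : ∀ (c : ℂ) (x : X) (a : A), rsmul (c • x) a = c • rsmul x a
  rsmul_smul : ∀ (c : ℂ) (x : X) (a : A), rsmul x (c • a) = c • rsmul x a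
  inner_add : ∀ (x y z : X), inner x (y + z) = inner x y + inner x z
  inner_smul : ∀ (c : ℂ) (x y : X), inner x (c • y) = c • inner x y
  inner_rsmul : ∀ (x y : X) (a : A), inner x (rsmul y a) = inner x y * a
  star_inner : ∀ (x y : X), star (inner x y) = inner y x
  inner_self_nonneg : ∀ x : X, 0 ≤ inner x x

/-- Positivity of a matrix as an element of the C⋆-algebra `Mₙ(A)`:
a matrix is positive iff it is of the form `bᴴ * b`. -/
def Matrix.IsPosElem {A : Type*} {n : ℕ} [NonUnitalCStarAlgebra A]
    (M : Matrix (Fin n) (Fin n) A) : Prop :=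
  ∃ b : Matrix (Fin n) (Fin n) A, M = b.conjTranspose * b

/-! Write `α = ‖⟨x,x⟩‖` and `a = ⟨x,y⟩`. Expanding `⟨w,w⟩` for `w = α y - x a` and bounding
`a* ⟨x,x⟩ a ≤ α a* a` gives `⟨w,w⟩ ≤ α (α ⟨y,y⟩ - ⟨y,x⟩⟨x,y⟩)`; the positivity of `⟨w,w⟩` is the
Cauchy–Schwarz inequality. Since `⟨z,x⟩ = 0`, `⟨z,w⟩ = α ⟨z,y⟩`, so Cauchy–Schwarz for `z` and `w`
gives `α² ⟨y,z⟩⟨z,y⟩ ≤ ‖⟨z,z⟩‖ ⟨w,w⟩ ≤ ‖⟨z,z⟩‖ α (α ⟨y,y⟩ - ⟨y,x⟩⟨x,y⟩)`. -/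

namespace SemiInnerProductModule

variable {A X : Type*} [NonUnitalCStarAlgebra A] [PartialOrder A] [StarOrderedRing A]
  [AddCommGroup X] [Module ℂ X] (P : SemiInnerProductModule A X)

lemma inner_sub_right (x y z : X) : P.inner x (y - z) = P.inner x y - P.inner x z :=
  (AddMonoidHom.mk' (P.inner x) (P.inner_add x)).map_sub y z

lemma inner_sub_left (x y z : X) : P.inner (x - y) z = P.inner x z - P.inner y z := by
  rw [← P.star_inner, P.inner_sub_right, star_sub, P.star_inner, P.star_inner]

lemma inner_smul_real_right (r : ℝ) (x y : X) : P.inner x (r • y) = r • P.inner x y := by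
  rw [← Complex.coe_smul, P.inner_smul, Complex.coe_smul]

lemma inner_smul_real_left (r : ℝ) (x y : X) : P.inner (r • x) y = r • P.inner x y := by
  rw [← P.star_inner, P.inner_smul_real_right, star_smul, star_trivial, P.star_inner]

lemma inner_rsmul_left (x y : X) (a : A) :
    P.inner (P.rsmul x a) y = star a * P.inner x y := by
  rw [← P.star_inner, P.inner_rsmul, star_mul, P.star_inner]

lemma inner_self_smul_sub_rsmul_le (x y : X) :
    P.inner (‖P.inner x x‖ • y - P.rsmul x (P.inner x y))
        (‖P.inner x x‖ • y - P.rsmul x (P.inner x y)) ≤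
      ‖P.inner x x‖ • (‖P.inner x x‖ • P.inner y y - P.inner y x * P.inner x y) := by
  set α := ‖P.inner x x‖
  set a := P.inner x y
  have hya : P.inner y x = star a := (P.star_inner x y).symm
  have hconj : star a * P.inner x x * a ≤ α • (star a * a) :=
    CStarAlgebra.star_left_conjugate_le_norm_smul (P.star_inner x x)
  calc _ = star a * P.inner x x * a - α • (star a * a) - α • (star a * a)
          + α • (α • P.inner y y) := by
        simp only [P.inner_sub_left, P.inner_sub_right, P.inner_smul_real_right, P.inner_smul_real_left,
          P.inner_rsmul, P.inner_rsmul_left, hya]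
        module
    _ ≤ α • (star a * a) - α • (star a * a) - α • (star a * a) + α • (α • P.inner y y) := by
        gcongr
    _ = _ := by rw [hya]; module

theorem inner_mul_inner_le_norm_smul (x y : X) (hx : P.inner x x ≠ 0) :
    P.inner y x * P.inner x y ≤ ‖P.inner x x‖ • P.inner y y := by
  have hα : 0 < ‖P.inner x x‖ := norm_pos_iff.mpr hx
  have h := (P.inner_self_nonneg _).trans (P.inner_self_smul_sub_rsmul_le x y)
  rwa [smul_nonneg_iff_nonneg_of_pos_left hα, sub_nonneg] at h

end SemiInnerProductModule

/-- The Ostrowski inequality in a semi-inner product `C*`-module: if `⟨x,z⟩ = 0`,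
`⟨x,x⟩ ≠ 0` and `⟨z,z⟩ ≠ 0`, then
`⟨y,z⟩⟨z,y⟩ ≤ (‖z‖²/‖x‖²) · (‖x‖²⟨y,y⟩ − ⟨y,x⟩⟨x,y⟩)`,
where `‖x‖² = ‖⟨x,x⟩‖` and `‖z‖² = ‖⟨z,z⟩‖`. -/
theorem ostrowski_ineq {A X : Type*}
    [NonUnitalCStarAlgebra A] [PartialOrder A] [StarOrderedRing A]
    [AddCommGroup X] [Module ℂ X]
    (P : SemiInnerProductModule A X) (x z : X)
    (hxz : P.inner x z = 0) (hx : P.inner x x ≠ 0) (hz : P.inner z z ≠ 0)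
    (y : X) :
    P.inner y z * P.inner z y ≤
      (‖P.inner z z‖ / ‖P.inner x x‖) •
        (‖P.inner x x‖ • P.inner y y - P.inner y x * P.inner x y) := by
  set α := ‖P.inner x x‖
  set β := ‖P.inner z z‖
  have hα : 0 < α := norm_pos_iff.mpr hx
  set w := α • y - P.rsmul x (P.inner x y)
  have hzx : P.inner z x = 0 := by rw [← P.star_inner, hxz, star_zero]
  have hzw : P.inner z w = α • P.inner z y := by
    rw [P.inner_sub_right, P.inner_smul_real_right, P.inner_rsmul, hzx, zero_mul, sub_zero]
  have hwz : P.inner w z = α • P.inner y z := by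
    rw [← P.star_inner, hzw, star_smul, star_trivial, P.star_inner]
  have key : (α * α) • (P.inner y z * P.inner z y) ≤
      (α * α) • ((β / α) • (α • P.inner y y - P.inner y x * P.inner x y)) := calc
    _ = P.inner w z * P.inner z w := by rw [hwz, hzw, smul_mul_smul_comm]
    _ ≤ β • P.inner w w := P.inner_mul_inner_le_norm_smul z w hz
    _ ≤ β • (α • (α • P.inner y y - P.inner y x * P.inner x y)) :=
        smul_le_smul_of_nonneg_left (P.inner_self_smul_sub_rsmul_le x y) (norm_nonneg _)
    _ = _ := by rw [smul_smul, smul_smul]; congr 1; field_simp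
  exact (smul_le_smul_iff_of_pos_left (mul_pos hα hα)).mp key
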